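/- Let ν be a Radon measure on ℝ^d, let C > 0, and let 𝒲 be a countable family of ν-integrable functions, each bounded below by C, with supremum-norm-precompact closure. Let 𝒜 be the set of points x ∈ spt ν such that for every ζ ∈ 𝒲, ‖μ_{x,t} − (ζ dν)_{x,t}‖ → 0 as t → ∞, where μ is a fixed measure with μ ≪ ζ dν for all ζ ∈ 𝒲 and μ(𝒜^c) = 0. Then for every ε > 0 there exist a set J ⊆ 𝒜 with μ(J) > 0 and N ∈ ℕ such that for all x ∈ J, all ζ ∈ 𝒲, and all t ≥ N, ‖μ_{x,t} − (ζ dν)_{x,t}‖ < ε. -/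

import Mathlib

open Filter Metric MeasureTheory
open scoped ENNReal UniformConvergence

/-- The normalized zoom-in `S*_t ν`. -/
noncomputable def zoomIn {d : ℕ} (ν : Measure (EuclideanSpace ℝ (Fin d))) (t : ℝ) :
    Measure (EuclideanSpace ℝ (Fin d)) :=
  (((Measure.map (fun y => Real.exp t • y) ν).restrict (closedBall 0 1)) Set.univ)⁻¹ •
    ((Measure.map (fun y => Real.exp t • y) ν).restrict (closedBall 0 1))

/-- The scenery measure `ν_{x,t} = S*_t T_x ν`. -/
noncomputable def sceneryM {d : ℕ} (ν : Measure (EuclideanSpace ℝ (Fin d)))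
    (x : EuclideanSpace ℝ (Fin d)) (t : ℝ) : Measure (EuclideanSpace ℝ (Fin d)) :=
  zoomIn (Measure.map (fun y => y - x) ν) t

/-- Total variation distance between measures. -/
noncomputable def tvDist {α : Type*} [MeasurableSpace α] (μ ν : Measure α) : ℝ≥0∞ :=
  ⨆ (A : Set α) (_ : MeasurableSet A), ((μ A - ν A) + (ν A - μ A))

/-!
If two densities are bounded below by `c` and differ by at most `κ c`, then for every
measurable set the two (unnormalized) sceneries differ by at most `κ` times either total
mass, so the normalized sceneries are within total variation `4κ`, uniformly in `x` and `t`.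
Total boundedness of `𝒲` thus reduces the claim to a finite net `F ⊆ 𝒲`. For finitely
many densities, every `x ∈ 𝒜` has a time after which all of them are `ε/2`-close; as `𝒜`
is the countable union over `N` of the sets where this time is at most `N`, one of these
sets has positive measure.
-/

open Set

section TotalVariation

variable {α β : Type*} [MeasurableSpace α] [MeasurableSpace β]

lemma tvDist_triangle (μ₁ μ₂ μ₃ : Measure α) :
    tvDist μ₁ μ₃ ≤ tvDist μ₁ μ₂ + tvDist μ₂ μ₃ := by
  refine iSup₂_le fun A hA => ?_
  calc (μ₁ A - μ₃ A) + (μ₃ A - μ₁ A)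
      ≤ ((μ₁ A - μ₂ A) + (μ₂ A - μ₃ A)) + ((μ₃ A - μ₂ A) + (μ₂ A - μ₁ A)) :=
        add_le_add tsub_le_tsub_add_tsub tsub_le_tsub_add_tsub
    _ = ((μ₁ A - μ₂ A) + (μ₂ A - μ₁ A)) + ((μ₂ A - μ₃ A) + (μ₃ A - μ₂ A)) := by ring
    _ ≤ tvDist μ₁ μ₂ + tvDist μ₂ μ₃ := by
      gcongr
      · exact le_iSup₂ (f := fun A (_ : MeasurableSet A) => (μ₁ A - μ₂ A) + (μ₂ A - μ₁ A)) A hA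
      · exact le_iSup₂ (f := fun A (_ : MeasurableSet A) => (μ₂ A - μ₃ A) + (μ₃ A - μ₂ A)) A hA

lemma ENNReal.div_le_div_add_of_le_add {p q P Q η κ : ℝ≥0∞} (hQ : Q ≠ ∞) (hqQ : q ≤ Q)
    (hpq : p ≤ q + η) (hQP : Q ≤ P + η) (hη : η ≤ κ * P) : p / P ≤ q / Q + 2 * κ := by
  have hq : q ≤ q / Q * P + η := by
    rcases eq_or_ne Q 0 with rfl | hQ0
    · simp [nonpos_iff_eq_zero.1 hqQ]
    have hqQ_le_one : q / Q ≤ 1 := ENNReal.div_le_of_le_mul (by rwa [one_mul])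
    calc q = q / Q * Q := (ENNReal.div_mul_cancel hQ0 hQ).symm
      _ ≤ q / Q * (P + η) := by gcongr
      _ = q / Q * P + q / Q * η := mul_add _ _ _
      _ ≤ q / Q * P + η := by gcongr; exact mul_le_of_le_one_left' hqQ_le_one
  refine ENNReal.div_le_of_le_mul ?_
  calc p ≤ q / Q * P + η + η := hpq.trans (by gcongr)
    _ ≤ q / Q * P + κ * P + κ * P := by gcongr
    _ = (q / Q + 2 * κ) * P := by ring

lemma tvDist_inv_smul_le {ρ₁ ρ₂ : Measure α} [IsFiniteMeasure ρ₁] [IsFiniteMeasure ρ₂]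
    {η κ : ℝ≥0∞} (h₁₂ : ∀ A, MeasurableSet A → ρ₁ A ≤ ρ₂ A + η)
    (h₂₁ : ∀ A, MeasurableSet A → ρ₂ A ≤ ρ₁ A + η)
    (hη₁ : η ≤ κ * ρ₁ univ) (hη₂ : η ≤ κ * ρ₂ univ) :
    tvDist ((ρ₁ univ)⁻¹ • ρ₁) ((ρ₂ univ)⁻¹ • ρ₂) ≤ 4 * κ := by
  refine iSup₂_le fun A hA => ?_
  simp only [Measure.smul_apply, smul_eq_mul, ← ENNReal.div_eq_inv_mul]
  have h₁ : ρ₁ A / ρ₁ univ ≤ ρ₂ A / ρ₂ univ + 2 * κ :=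
    ENNReal.div_le_div_add_of_le_add (measure_ne_top _ _) (measure_mono (subset_univ _))
      (h₁₂ A hA) (h₂₁ univ .univ) hη₁
  have h₂ : ρ₂ A / ρ₂ univ ≤ ρ₁ A / ρ₁ univ + 2 * κ :=
    ENNReal.div_le_div_add_of_le_add (measure_ne_top _ _) (measure_mono (subset_univ _))
      (h₂₁ A hA) (h₁₂ univ .univ) hη₂
  calc _ ≤ 2 * κ + 2 * κ := add_le_add (tsub_le_iff_left.2 h₁) (tsub_le_iff_left.2 h₂)
    _ = 4 * κ := by ring

noncomputable def normalizedRestrict (ρ : Measure β) (B : Set β) : Measure β :=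
  (ρ.restrict B univ)⁻¹ • ρ.restrict B

variable {μ : Measure α} {f g : α → ℝ≥0∞} {s : Set α}

lemma withDensity_apply_le_add {δ : ℝ≥0∞} (hfg : ∀ x, f x ≤ g x + δ) (hs : MeasurableSet s) :
    μ.withDensity f s ≤ μ.withDensity g s + δ * μ s := by
  rw [withDensity_apply _ hs, withDensity_apply _ hs, ← setLIntegral_const,
    ← lintegral_add_right _ measurable_const]
  exact lintegral_mono hfg

lemma mul_le_withDensity_apply {c : ℝ≥0∞} (hcf : ∀ x, c ≤ f x) (hs : MeasurableSet s) :
    c * μ s ≤ μ.withDensity f s := by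
  rw [withDensity_apply _ hs, ← setLIntegral_const]
  exact lintegral_mono hcf

lemma tvDist_normalizedRestrict_map_withDensity_le (hf : ∫⁻ x, f x ∂μ ≠ ∞)
    (hg : ∫⁻ x, g x ∂μ ≠ ∞) {c κ : ℝ≥0∞} (hcf : ∀ x, c ≤ f x) (hcg : ∀ x, c ≤ g x)
    (hfg : ∀ x, f x ≤ g x + κ * c) (hgf : ∀ x, g x ≤ f x + κ * c)
    {φ : α → β} (hφ : Measurable φ) {B : Set β} (hB : MeasurableSet B) :
    tvDist (normalizedRestrict ((μ.withDensity f).map φ) B)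
      (normalizedRestrict ((μ.withDensity g).map φ) B) ≤ 4 * κ := by
  have := isFiniteMeasure_withDensity hf
  have := isFiniteMeasure_withDensity hg
  have restrict_map_apply (h : α → ℝ≥0∞) (A : Set β) (hA : MeasurableSet A) :
      ((μ.withDensity h).map φ).restrict B A = μ.withDensity h (φ ⁻¹' (A ∩ B)) := by
    rw [Measure.restrict_apply hA, Measure.map_apply hφ (hA.inter hB)]
  have apply_le_add {h₁ h₂ : α → ℝ≥0∞} (h₁₂ : ∀ x, h₁ x ≤ h₂ x + κ * c) (A : Set β)
      (hA : MeasurableSet A) : ((μ.withDensity h₁).map φ).restrict B A ≤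
        ((μ.withDensity h₂).map φ).restrict B A + κ * c * μ (φ ⁻¹' B) := by
    rw [restrict_map_apply _ A hA, restrict_map_apply _ A hA]
    calc _ ≤ μ.withDensity h₂ (φ ⁻¹' (A ∩ B)) + κ * c * μ (φ ⁻¹' (A ∩ B)) :=
          withDensity_apply_le_add h₁₂ (hφ (hA.inter hB))
      _ ≤ _ := by gcongr; exact inter_subset_right
  have mass_ge {h : α → ℝ≥0∞} (hch : ∀ x, c ≤ h x) :
      κ * c * μ (φ ⁻¹' B) ≤ κ * ((μ.withDensity h).map φ).restrict B univ := by
    rw [restrict_map_apply _ univ .univ, univ_inter, mul_assoc]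
    gcongr
    exact mul_le_withDensity_apply hch (hφ hB)
  exact tvDist_inv_smul_le (apply_le_add hfg) (apply_le_add hgf) (mass_ge hcf) (mass_ge hcg)

end TotalVariation

lemma exists_nat_pos_measure_forall_ge {X : Type*} [MeasurableSpace X] {μ : Measure X}
    {𝒜 : Set X} (h𝒜 : 0 < μ 𝒜) {P : X → ℝ → Prop}
    (hP : ∀ x ∈ 𝒜, ∀ᶠ t in atTop, P x t) :
    ∃ N : ℕ, 0 < μ {x ∈ 𝒜 | ∀ t, (N : ℝ) ≤ t → P x t} := by
  by_contra! hnull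
  have h𝒜_subset : 𝒜 ⊆ ⋃ N : ℕ, {x ∈ 𝒜 | ∀ t, (N : ℝ) ≤ t → P x t} := by
    intro x hx
    obtain ⟨T, hT⟩ := eventually_atTop.1 (hP x hx)
    exact mem_iUnion.2 ⟨⌈T⌉₊, hx, fun t ht => hT t ((Nat.le_ceil T).trans ht)⟩
  have := measure_mono_null h𝒜_subset
    (measure_iUnion_null_iff.2 fun N => nonpos_iff_eq_zero.1 (hnull N))
  exact h𝒜.ne' this

section Scenery

variable {d : ℕ}

lemma sceneryM_eq_normalizedRestrict (ρ : Measure (EuclideanSpace ℝ (Fin d)))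
    (x : EuclideanSpace ℝ (Fin d)) (t : ℝ) :
    sceneryM ρ x t =
      normalizedRestrict (ρ.map fun y => Real.exp t • (y - x)) (closedBall 0 1) := by
  rw [sceneryM, zoomIn, Measure.map_map (by fun_prop) (by fun_prop)]
  rfl

lemma tvDist_sceneryM_withDensity_le {ν : Measure (EuclideanSpace ℝ (Fin d))}
    {f g : EuclideanSpace ℝ (Fin d) → ℝ≥0∞} (hf : ∫⁻ y, f y ∂ν ≠ ∞) (hg : ∫⁻ y, g y ∂ν ≠ ∞)
    {c κ : ℝ≥0∞} (hcf : ∀ y, c ≤ f y) (hcg : ∀ y, c ≤ g y)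
    (hfg : ∀ y, f y ≤ g y + κ * c) (hgf : ∀ y, g y ≤ f y + κ * c)
    (x : EuclideanSpace ℝ (Fin d)) (t : ℝ) :
    tvDist (sceneryM (ν.withDensity f) x t) (sceneryM (ν.withDensity g) x t) ≤ 4 * κ := by
  rw [sceneryM_eq_normalizedRestrict, sceneryM_eq_normalizedRestrict]
  exact tvDist_normalizedRestrict_map_withDensity_le hf hg hcf hcg hfg hgf (by fun_prop)
    measurableSet_closedBall

lemma exists_finite_net_tvDist_sceneryM_le (ν : Measure (EuclideanSpace ℝ (Fin d)))
    {C : ℝ} (hC : 0 < C) {𝒲 : Set (EuclideanSpace ℝ (Fin d) →ᵤ ℝ)} (h𝒲 : TotallyBounded 𝒲)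
    (hint : ∀ ζ ∈ 𝒲, Integrable ζ ν) (hlb : ∀ ζ ∈ 𝒲, ∀ y, C ≤ ζ y) {κ : ℝ} (hκ : 0 < κ) :
    ∃ F ⊆ 𝒲, F.Finite ∧ ∀ ζ ∈ 𝒲, ∃ g ∈ F, ∀ x t,
      tvDist (sceneryM (ν.withDensity fun y => ENNReal.ofReal (g y)) x t)
        (sceneryM (ν.withDensity fun y => ENNReal.ofReal (ζ y)) x t) ≤ ENNReal.ofReal κ := by
  have hclose : {p : ℝ × ℝ | dist p.1 p.2 < κ / 4 * C} ∈ uniformity ℝ :=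
    Metric.dist_mem_uniformity (by positivity)
  obtain ⟨F, hF𝒲, hFfin, hcover⟩ := totallyBounded_iff_subset.1 h𝒲 _
    ((UniformFun.hasBasis_uniformity _ _).mem_of_mem hclose)
  refine ⟨F, hF𝒲, hFfin, fun ζ hζ => ?_⟩
  obtain ⟨g, hgF, hgζ⟩ := mem_iUnion₂.1 (hcover hζ)
  have ofReal_le_add {a b : ℝ} (hab : dist a b < κ / 4 * C) :
      ENNReal.ofReal a ≤ ENNReal.ofReal b + ENNReal.ofReal (κ / 4) * ENNReal.ofReal C := by
    rw [← ENNReal.ofReal_mul (by positivity)]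
    refine (ENNReal.ofReal_le_ofReal ?_).trans ENNReal.ofReal_add_le
    linarith [(abs_lt.1 (Real.dist_eq a b ▸ hab)).2]
  refine ⟨g, hgF, fun x t => ?_⟩
  have h4 : 4 * ENNReal.ofReal (κ / 4) = ENNReal.ofReal κ := by
    rw [← ENNReal.ofReal_ofNat, ← ENNReal.ofReal_mul (by norm_num)]
    ring_nf
  rw [← h4]
  exact tvDist_sceneryM_withDensity_le (hint g (hF𝒲 hgF)).lintegral_lt_top.ne
    (hint ζ hζ).lintegral_lt_top.ne
    (fun y => ENNReal.ofReal_le_ofReal (hlb g (hF𝒲 hgF) y))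
    (fun y => ENNReal.ofReal_le_ofReal (hlb ζ hζ y))
    (fun y => ofReal_le_add (dist_comm (ζ y) (g y) ▸ hgζ y)) (fun y => ofReal_le_add (hgζ y)) x t

end Scenery

theorem stmt14_general {d : ℕ} (ν : Measure (EuclideanSpace ℝ (Fin d)))
    (C : ℝ) (hC : 0 < C)
    (𝒲 : Set (EuclideanSpace ℝ (Fin d) →ᵤ ℝ))
    (hint : ∀ ζ ∈ 𝒲, Integrable ζ ν) (hlb : ∀ ζ ∈ 𝒲, ∀ x, C ≤ ζ x)
    (hcompact : IsCompact (closure 𝒲))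
    (μ : Measure (EuclideanSpace ℝ (Fin d))) [IsProbabilityMeasure μ]
    (𝒜 : Set (EuclideanSpace ℝ (Fin d)))
    (h𝒜 : 𝒜 = {x | ∀ ζ ∈ 𝒲, Tendsto
      (fun t => tvDist (sceneryM μ x t)
        (sceneryM (ν.withDensity (fun y => ENNReal.ofReal (ζ y))) x t))
      atTop (nhds 0)})
    (hμ𝒜 : μ 𝒜ᶜ = 0) :
    ∀ ε : ℝ≥0∞, 0 < ε →
      ∃ (J : Set (EuclideanSpace ℝ (Fin d))) (N : ℕ), J ⊆ 𝒜 ∧ 0 < μ J ∧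
        ∀ x ∈ J, ∀ ζ ∈ 𝒲, ∀ t : ℝ, (N : ℝ) ≤ t →
          tvDist (sceneryM μ x t)
            (sceneryM (ν.withDensity (fun y => ENNReal.ofReal (ζ y))) x t) < ε := by
  intro ε hε
  have h𝒜_pos : 0 < μ 𝒜 := by
    refine pos_iff_ne_zero.2 fun h𝒜_null => ?_
    simpa [union_compl_self] using measure_union_null h𝒜_null hμ𝒜
  obtain ⟨κ, -, hκ, hκε⟩ := ENNReal.lt_iff_exists_real_btwn.1 (ENNReal.half_pos hε.ne')
  obtain ⟨F, hF𝒲, hFfin, hnet⟩ := exists_finite_net_tvDist_sceneryM_le ν hC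
    (hcompact.totallyBounded.subset subset_closure) hint hlb (ENNReal.ofReal_pos.1 hκ)
  obtain ⟨N, hN⟩ := exists_nat_pos_measure_forall_ge h𝒜_pos (P := fun x t => ∀ g ∈ F,
    tvDist (sceneryM μ x t) (sceneryM (ν.withDensity fun y => ENNReal.ofReal (g y)) x t) < ε / 2)
    (fun x hx => hFfin.eventually_all.2 fun g hg =>
      ((h𝒜 ▸ hx) g (hF𝒲 hg)).eventually_lt_const (ENNReal.half_pos hε.ne'))
  refine ⟨_, N, sep_subset _ _, hN, fun x hx ζ hζ t ht => ?_⟩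
  obtain ⟨g, hgF, hgζ⟩ := hnet ζ hζ
  calc _ ≤ _ := tvDist_triangle _ (sceneryM (ν.withDensity fun y => ENNReal.ofReal (g y)) x t) _
    _ < ε / 2 + ε / 2 := ENNReal.add_lt_add (hx.2 t ht g hgF) ((hgζ x t).trans_lt hκε)
    _ = ε := ENNReal.add_halves ε

/-- **Uniform approximation of the scenery on a positive-measure set.**
Let `ν` be Radon, `𝒲` a countable sup-norm-precompact family of ν-integrable
densities bounded below by `C > 0`, `μ ≪ ζ dν` for all `ζ ∈ 𝒲`, and let `𝒜` be
the set of points where `‖μ_{x,t} − (ζ dν)_{x,t}‖ → 0` for every `ζ ∈ 𝒲`;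
assume `μ(𝒜ᶜ) = 0`. Then for every `ε > 0` there are `J ⊆ 𝒜` with `μ J > 0`
and `N ∈ ℕ` such that `‖μ_{x,t} − (ζ dν)_{x,t}‖ < ε` for all `x ∈ J`, `ζ ∈ 𝒲`,
`t ≥ N`. -/
theorem stmt14 {d : ℕ} (ν : Measure (EuclideanSpace ℝ (Fin d)))
    [IsLocallyFiniteMeasure ν] (C : ℝ) (hC : 0 < C)
    (𝒲 : Set (EuclideanSpace ℝ (Fin d) →ᵤ ℝ)) (hcount : 𝒲.Countable)
    (hint : ∀ ζ ∈ 𝒲, Integrable ζ ν) (hlb : ∀ ζ ∈ 𝒲, ∀ x, C ≤ ζ x)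
    (hcompact : IsCompact (closure 𝒲))
    (μ : Measure (EuclideanSpace ℝ (Fin d))) [IsProbabilityMeasure μ]
    (hac : ∀ ζ ∈ 𝒲, μ ≪ ν.withDensity (fun y => ENNReal.ofReal (ζ y)))
    (𝒜 : Set (EuclideanSpace ℝ (Fin d)))
    (h𝒜 : 𝒜 = {x | ∀ ζ ∈ 𝒲, Tendsto
      (fun t => tvDist (sceneryM μ x t)
        (sceneryM (ν.withDensity (fun y => ENNReal.ofReal (ζ y))) x t))
      atTop (nhds 0)})
    (hμ𝒜 : μ 𝒜ᶜ = 0) :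
    ∀ ε : ℝ≥0∞, 0 < ε →
      ∃ (J : Set (EuclideanSpace ℝ (Fin d))) (N : ℕ), J ⊆ 𝒜 ∧ 0 < μ J ∧
        ∀ x ∈ J, ∀ ζ ∈ 𝒲, ∀ t : ℝ, (N : ℝ) ≤ t →
          tvDist (sceneryM μ x t)
            (sceneryM (ν.withDensity (fun y => ENNReal.ofReal (ζ y))) x t) < ε :=
  stmt14_general ν C hC 𝒲 hint hlb hcompact μ 𝒜 h𝒜 hμ𝒜
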